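/- arXiv:1210.4487 — 2 statements merged into one kernel-verified Lean document; each statement's English description precedes it below -/
import Mathlib

section
/- Let Ω ⊂ ℝⁿ_* be a smooth bounded domain with closure contained in ℝⁿ_*, A a nonnegative vector in ℝⁿ, and u a smooth solution of div(x^A ∇u) = b·x^A in Ω with ∂u/∂ν = 1 on ∂Ω, where b = P(Ω)/m(Ω). Let Γ* = {x ∈ Ω : u(y) ≥ u(x) + ∇u(x)·(y−x) for all y ∈ closure(Ω), and ∇u(x) ∈ ℝⁿ_*}. Then B₁(0) ∩ ℝⁿ_* ⊆ ∇u(Γ*). -/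
/-!
Fix `p` with `‖p‖ < 1` and minimise `u y - ⟪p, y⟫` over the compact set `closure Ω`.
At a boundary point `x` the inward direction `-ν x` lies in the tangent cone of `closure Ω`,
so minimality forces `⟪∇u x, ν x⟫ ≤ ⟪p, ν x⟫ ≤ ‖p‖ < 1`, contradicting the Neumann condition.
Hence the minimum is attained in the open set `Ω`, where `∇u = p`; the plane through that point
with slope `p` lies below `u` on `closure Ω` by minimality.
-/

open MeasureTheory Filter Topology InnerProductSpace

section TiltedMinimum

variable {E : Type*} [NormedAddCommGroup E] [InnerProductSpace ℝ E] {u : E → ℝ} {p x : E}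

theorem add_inner_sub_le_of_isMinOn_sub_inner {s : Set E} {y : E}
    (hmin : IsMinOn (fun y => u y - ⟪p, y⟫_ℝ) s x) (hy : y ∈ s) :
    u x + ⟪p, y - x⟫_ℝ ≤ u y := by
  have hxy : u x - ⟪p, x⟫_ℝ ≤ u y - ⟪p, y⟫_ℝ := hmin hy
  rw [inner_sub_right]
  linarith

variable [CompleteSpace E]

theorem hasFDerivAt_sub_inner (hu : DifferentiableAt ℝ u x) :
    HasFDerivAt (fun y => u y - ⟪p, y⟫_ℝ) (toDual ℝ E (gradient u x - p)) x := by
  refine (hu.hasGradientAt.hasFDerivAt.sub (innerSL ℝ p).hasFDerivAt).congr_fderiv ?_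
  ext v
  simp

theorem gradient_eq_of_isLocalMin_sub_inner (hu : DifferentiableAt ℝ u x)
    (hmin : IsLocalMin (fun y => u y - ⟪p, y⟫_ℝ) x) : gradient u x = p := by
  have hzero := hmin.hasFDerivAt_eq_zero (hasFDerivAt_sub_inner hu)
  rwa [LinearIsometryEquiv.map_eq_zero_iff, sub_eq_zero] at hzero

theorem inner_gradient_le_of_isMinOn_sub_inner {s : Set E} {w : E} (hu : DifferentiableAt ℝ u x)
    (hmin : IsMinOn (fun y => u y - ⟪p, y⟫_ℝ) s x) (hw : -w ∈ posTangentConeAt s x) :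
    ⟪gradient u x, w⟫_ℝ ≤ ⟪p, w⟫_ℝ := by
  have hnonneg := hmin.localize.hasFDerivWithinAt_nonneg
    (hasFDerivAt_sub_inner hu).hasFDerivWithinAt hw
  rw [toDual_apply_apply, inner_neg_right, inner_sub_left] at hnonneg
  linarith

theorem mem_of_isMinOn_sub_inner_closure {Ω : Set E} (hΩ : IsOpen Ω) {ν : E → E}
    (hν : ∀ x ∈ frontier Ω, ‖ν x‖ = 1)
    (hνout : ∀ x ∈ frontier Ω, ∀ᶠ t : ℝ in 𝓝[>] 0, x - t • ν x ∈ Ω)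
    (hNeumann : ∀ x ∈ frontier Ω, ⟪gradient u x, ν x⟫_ℝ = 1)
    (hu : DifferentiableAt ℝ u x) (hp : ‖p‖ < 1) (hx : x ∈ closure Ω)
    (hmin : IsMinOn (fun y => u y - ⟪p, y⟫_ℝ) (closure Ω) x) : x ∈ Ω := by
  by_contra hxΩ
  have hfr : x ∈ frontier Ω := by rw [hΩ.frontier_eq]; exact ⟨hx, hxΩ⟩
  have hinward : -ν x ∈ posTangentConeAt (closure Ω) x := by
    refine mem_posTangentConeAt_of_frequently_mem ((hνout x hfr).frequently.mono ?_)
    intro t ht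
    simpa [← sub_eq_add_neg] using subset_closure ht
  have hle := inner_gradient_le_of_isMinOn_sub_inner hu hmin hinward
  have hpν : ⟪p, ν x⟫_ℝ < 1 :=
    (real_inner_le_norm p (ν x)).trans_lt (by rwa [hν x hfr, mul_one])
  linarith [hNeumann x hfr]

end TiltedMinimum

theorem contact_set_inclusion_general (n : ℕ)
    (Rstar : Set (EuclideanSpace ℝ (Fin n)))
    (Ω : Set (EuclideanSpace ℝ (Fin n))) (hΩopen : IsOpen Ω)
    (hΩbdd : Bornology.IsBounded Ω) (hΩne : Ω.Nonempty)
    (u : EuclideanSpace ℝ (Fin n) → ℝ) (hu : ContDiff ℝ 2 u)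
    -- `ν` is the outward unit normal to `∂Ω`
    (ν : EuclideanSpace ℝ (Fin n) → EuclideanSpace ℝ (Fin n))
    (hν : ∀ x ∈ frontier Ω, ‖ν x‖ = 1)
    (hνout : ∀ x ∈ frontier Ω, ∀ᶠ t : ℝ in nhdsWithin 0 (Set.Ioi 0), x - t • ν x ∈ Ω)
    -- the Neumann condition `∂u/∂ν = 1` on `∂Ω`
    (hNeumann : ∀ x ∈ frontier Ω, (inner ℝ (gradient u x) (ν x) : ℝ) = 1) :
    Metric.ball 0 1 ∩ Rstar ⊆
      (fun x => gradient u x) ''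
        {x ∈ Ω | (∀ y ∈ closure Ω, u x + (inner ℝ (gradient u x) (y - x) : ℝ) ≤ u y)
          ∧ gradient u x ∈ Rstar} := by
  rintro p ⟨hpball, hpR⟩
  have hp : ‖p‖ < 1 := mem_ball_zero_iff.mp hpball
  have hud : Differentiable ℝ u := hu.differentiable two_ne_zero
  obtain ⟨x, hxcl, hmin⟩ := hΩbdd.isCompact_closure.exists_isMinOn hΩne.closure
    (hud.continuous.sub (innerSL ℝ p).continuous).continuousOn
  have hxΩ := mem_of_isMinOn_sub_inner_closure hΩopen hν hνout hNeumann (hud x) hp hxcl hmin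
  have hgrad : gradient u x = p := gradient_eq_of_isLocalMin_sub_inner (hud x)
    (hmin.isLocalMin (mem_of_superset (hΩopen.mem_nhds hxΩ) subset_closure))
  refine ⟨x, ⟨hxΩ, fun y hy => ?_, hgrad ▸ hpR⟩, hgrad⟩
  rw [hgrad]
  exact add_inner_sub_le_of_isMinOn_sub_inner hmin hy

/-- ABP-type contact set inclusion: if `u` solves the weighted Neumann problem
`div(x^A ∇u) = b x^A` in `Ω`, `∂u/∂ν = 1` on `∂Ω`, with `b = P(Ω)/m(Ω)`, then the
gradient image of the lower contact set (restricted to gradients in `ℝⁿ_*`) covers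
`B₁ ∩ ℝⁿ_*`. -/
theorem contact_set_inclusion (n : ℕ) (A : Fin n → ℝ) (hA : ∀ i, 0 ≤ A i)
    (Rstar : Set (EuclideanSpace ℝ (Fin n)))
    (hRstar : Rstar = {x | ∀ i, 0 < A i → 0 < x i})
    (Ω : Set (EuclideanSpace ℝ (Fin n))) (hΩopen : IsOpen Ω)
    (hΩbdd : Bornology.IsBounded Ω) (hΩne : Ω.Nonempty)
    (hΩsub : closure Ω ⊆ Rstar)
    (u : EuclideanSpace ℝ (Fin n) → ℝ) (hu : ContDiff ℝ 2 u)
    (b : ℝ)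
    (hb : b = (∫ x in frontier Ω, ∏ i, |x i| ^ A i ∂(μH[(n : ℝ) - 1]))
        / (∫ x in Ω, ∏ i, |x i| ^ A i))
    -- the equation `x^{-A} div(x^A ∇u) = Σ Aᵢ u_{xᵢ}/xᵢ + Δu = b` in `Ω`
    (hPDE : ∀ x ∈ Ω,
      (∑ i, A i * gradient u x i / x i) +
      (∑ i, fderiv ℝ (fun y => gradient u y i) x (EuclideanSpace.single i 1)) = b)
    -- `ν` is the outward unit normal to `∂Ω`
    (ν : EuclideanSpace ℝ (Fin n) → EuclideanSpace ℝ (Fin n))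
    (hν : ∀ x ∈ frontier Ω, ‖ν x‖ = 1)
    (hνout : ∀ x ∈ frontier Ω, ∀ᶠ t : ℝ in nhdsWithin 0 (Set.Ioi 0), x - t • ν x ∈ Ω)
    -- the Neumann condition `∂u/∂ν = 1` on `∂Ω`
    (hNeumann : ∀ x ∈ frontier Ω, (inner ℝ (gradient u x) (ν x) : ℝ) = 1) :
    Metric.ball 0 1 ∩ Rstar ⊆
      (fun x => gradient u x) ''
        {x ∈ Ω | (∀ y ∈ closure Ω, u x + (inner ℝ (gradient u x) (y - x) : ℝ) ≤ u y)
          ∧ gradient u x ∈ Rstar} :=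
  contact_set_inclusion_general n Rstar Ω hΩopen hΩbdd hΩne u hu ν hν hνout hNeumann
end

section
/- Let D > 1 be a real number, and for 1 < p < D let C_p = C₁ D^{1−1/D−1/p} ((p−1)/(D−p))^{1/p'} (p' Γ(D) / (Γ(D/p)Γ(D/p')))^{1/D}, where p' = p/(p−1) and C₁ > 0 is a fixed constant. Then there is a constant C₀ (depending only on D and C₁) such that C_p ≤ C₀ (p*)^{1−1/D} for all 1 < p < D, where p* = pD/(D−p). -/
open Real Set

/-!
Each factor of `C_p` is bounded separately. Since `1/p' = 1 - 1/p ≤ 1 - 1/D`, the factor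
`((p-1)/(D-p))^{1/p'}` is at most `(p*)^{1-1/D}`, and `D^{1-1/D-1/p} ≤ D`. In the Gamma factor,
`p' / Γ(D/p') = D / Γ(D/p' + 1)`, and both `D/p` and `D/p' + 1 = D - D/p + 1` lie in `[1, D]`,
where `Γ` is bounded below by a positive constant.
-/

namespace Real

theorem exists_pos_le_Gamma_of_mem_Icc (b : ℝ) : ∃ c > 0, ∀ y ∈ Icc 1 b, c ≤ Gamma y := by
  rcases (Icc (1 : ℝ) b).eq_empty_or_nonempty with hempty | hne
  · exact ⟨1, one_pos, by simp [hempty]⟩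
  have hcont : ContinuousOn Gamma (Icc 1 b) :=
    differentiableOn_Gamma_Ioi.continuousOn.mono fun y hy => one_pos.trans_le hy.1
  obtain ⟨x₀, hx₀, hmin⟩ := isCompact_Icc.exists_isMinOn hne hcont
  exact ⟨Gamma x₀, Gamma_pos_of_pos (one_pos.trans_le hx₀.1), fun y hy => hmin hy⟩

theorem div_Gamma_div_eq {D q : ℝ} (hD : D ≠ 0) (hq : q ≠ 0) :
    q / Gamma (D / q) = D / Gamma (D / q + 1) := by
  rw [Gamma_add_one (div_ne_zero hD hq)]
  field_simp

theorem rpow_le_rpow_of_le_of_exponent_le {a b s t : ℝ} (ha : 0 ≤ a) (hab : a ≤ b) (hb : 1 ≤ b)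
    (hs : 0 ≤ s) (hst : s ≤ t) : a ^ s ≤ b ^ t := by
  rcases le_total a 1 with ha1 | ha1
  · exact (rpow_le_one ha ha1 hs).trans (one_le_rpow hb (hs.trans hst))
  · exact (rpow_le_rpow_of_exponent_le ha1 hst).trans (rpow_le_rpow ha hab (hs.trans hst))

end Real

section SobolevConstant

variable {D p : ℝ}

theorem rpow_one_sub_one_div_sub_one_div_le (hp : 1 < p) (hpD : p < D) :
    D ^ (1 - 1 / D - 1 / p) ≤ D := by
  have hD : 0 < D := by linarith
  calc D ^ (1 - 1 / D - 1 / p) ≤ D ^ (1 : ℝ) := by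
        apply rpow_le_rpow_of_exponent_le (by linarith)
        have := one_div_pos.mpr hD
        have := one_div_pos.mpr (by linarith : 0 < p)
        linarith
    _ = D := rpow_one D

theorem div_rpow_conjExponent_le (hp : 1 < p) (hpD : p < D) :
    ((p - 1) / (D - p)) ^ (1 / (p / (p - 1))) ≤ (p * D / (D - p)) ^ (1 - 1 / D) := by
  have hp0 : 0 < p := by linarith
  have hDp : 0 < D - p := by linarith
  have hexp : 1 / (p / (p - 1)) = 1 - 1 / p := by
    rw [one_div_div]
    field_simp
  rw [hexp]
  apply rpow_le_rpow_of_le_of_exponent_le (div_nonneg (by linarith) hDp.le)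
  · gcongr
    nlinarith
  · rw [le_div_iff₀ hDp]
    nlinarith
  · have : 1 / p ≤ 1 := by rw [div_le_one hp0]; linarith
    linarith
  · have : 1 / D ≤ 1 / p := one_div_le_one_div_of_le hp0 hpD.le
    linarith

theorem conjExponent_mul_Gamma_div_le {c : ℝ} (hp : 1 < p) (hpD : p < D) (hc : 0 < c)
    (hΓ : ∀ y ∈ Icc 1 D, c ≤ Gamma y) :
    p / (p - 1) * Gamma D / (Gamma (D / p) * Gamma (D / (p / (p - 1))))
      ≤ D * Gamma D / c ^ 2 := by
  have hp0 : 0 < p := by linarith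
  have hD : 0 < D := by linarith
  have hq : p / (p - 1) ≠ 0 := by
    have : 0 < p - 1 := by linarith
    positivity
  have hDp_mem : D / p ∈ Icc 1 D := by
    constructor
    · rw [le_div_iff₀ hp0]; linarith
    · rw [div_le_iff₀ hp0]; nlinarith
  have hDq_mem : D / (p / (p - 1)) + 1 ∈ Icc 1 D := by
    have hDq : D / (p / (p - 1)) = D - D / p := by field_simp
    rw [hDq]
    constructor <;> linarith [hDp_mem.1, hDp_mem.2]
  have hΓ₁ := hΓ _ hDp_mem
  have hΓ₂ := hΓ _ hDq_mem
  calc p / (p - 1) * Gamma D / (Gamma (D / p) * Gamma (D / (p / (p - 1))))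
      = Gamma D / Gamma (D / p) * (p / (p - 1) / Gamma (D / (p / (p - 1)))) := by ring
    _ = D * Gamma D / (Gamma (D / p) * Gamma (D / (p / (p - 1)) + 1)) := by
        rw [Real.div_Gamma_div_eq hD.ne' hq]
        ring
    _ ≤ D * Gamma D / c ^ 2 := by
        have := Gamma_pos_of_pos hD
        gcongr
        rw [sq]
        exact mul_le_mul hΓ₁ hΓ₂ hc.le (hc.le.trans hΓ₁)

theorem conjExponent_mul_Gamma_div_nonneg (hp : 1 < p) (hpD : p < D) :
    0 ≤ p / (p - 1) * Gamma D / (Gamma (D / p) * Gamma (D / (p / (p - 1)))) := by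
  have hp1 : 0 < p - 1 := by linarith
  have hD : 0 < D := by linarith
  have := Gamma_pos_of_pos hD
  have := Gamma_pos_of_pos (by positivity : 0 < D / p)
  have := Gamma_pos_of_pos (by positivity : 0 < D / (p / (p - 1)))
  positivity

theorem sobolev_constant_div_le {c : ℝ} (hp : 1 < p) (hpD : p < D) (hc : 0 < c)
    (hΓ : ∀ y ∈ Icc 1 D, c ≤ Gamma y) :
    D ^ (1 - 1 / D - 1 / p) * ((p - 1) / (D - p)) ^ (1 / (p / (p - 1))) *
        (p / (p - 1) * Gamma D / (Gamma (D / p) * Gamma (D / (p / (p - 1))))) ^ (1 / D)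
      ≤ D * (p * D / (D - p)) ^ (1 - 1 / D) * (D * Gamma D / c ^ 2) ^ (1 / D) := by
  have hD : 0 < D := by linarith
  have hp1 : 0 < p - 1 := by linarith
  have hDp : 0 < D - p := by linarith
  have := conjExponent_mul_Gamma_div_nonneg hp hpD
  gcongr ?_ * ?_ * ?_ ^ _
  · exact rpow_one_sub_one_div_sub_one_div_le hp hpD
  · exact div_rpow_conjExponent_le hp hpD
  · exact conjExponent_mul_Gamma_div_le hp hpD hc hΓ

end SobolevConstant

theorem sobolev_constant_bound_general (D C₁ : ℝ) :
    ∃ C₀ : ℝ, ∀ p : ℝ, 1 < p → p < D →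
      C₁ * D ^ (1 - 1 / D - 1 / p) * ((p - 1) / (D - p)) ^ (1 / (p / (p - 1))) *
          ((p / (p - 1)) * Real.Gamma D /
            (Real.Gamma (D / p) * Real.Gamma (D / (p / (p - 1))))) ^ (1 / D)
        ≤ C₀ * (p * D / (D - p)) ^ (1 - 1 / D) := by
  obtain ⟨c, hc, hΓ⟩ := Real.exists_pos_le_Gamma_of_mem_Icc D
  refine ⟨|C₁| * D * (D * Gamma D / c ^ 2) ^ (1 / D), fun p hp hpD => ?_⟩
  have hD : 0 < D := by linarith
  have hDp : 0 < D - p := by linarith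
  calc _ = C₁ * (D ^ (1 - 1 / D - 1 / p) * ((p - 1) / (D - p)) ^ (1 / (p / (p - 1))) *
          (p / (p - 1) * Gamma D / (Gamma (D / p) * Gamma (D / (p / (p - 1))))) ^ (1 / D)) := by
        ring
    _ ≤ |C₁| * (D * (p * D / (D - p)) ^ (1 - 1 / D) * (D * Gamma D / c ^ 2) ^ (1 / D)) :=
        mul_le_mul (le_abs_self C₁) (sobolev_constant_div_le hp hpD hc hΓ) (by positivity)
          (abs_nonneg C₁)
    _ = |C₁| * D * (D * Gamma D / c ^ 2) ^ (1 / D) * (p * D / (D - p)) ^ (1 - 1 / D) := by ring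

/-- Bound on the optimal weighted Sobolev constant `C_p` as `p` approaches `D`. -/
theorem sobolev_constant_bound (D C₁ : ℝ) (hD : 1 < D) (hC₁ : 0 < C₁) :
    ∃ C₀ : ℝ, ∀ p : ℝ, 1 < p → p < D →
      C₁ * D ^ (1 - 1 / D - 1 / p) * ((p - 1) / (D - p)) ^ (1 / (p / (p - 1))) *
          ((p / (p - 1)) * Real.Gamma D /
            (Real.Gamma (D / p) * Real.Gamma (D / (p / (p - 1))))) ^ (1 / D)
        ≤ C₀ * (p * D / (D - p)) ^ (1 - 1 / D) :=
  sobolev_constant_bound_general D C₁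
end
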